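/- arXiv:1608.00209 — 7 statements merged into one kernel-verified Lean document; each statement's English description precedes it below -/
import Mathlib

section
/- For nonnegative reals M1 ≥ M2 ≥ M3 with M1 ≤ M2 + M3, the allocation M_T1 = M1, M_R1 = 0, M_T2 = M_T3 = (M2+M3−M1)/3, M_R2 = (M1+2M2−M3)/3, M_R3 = (M1+2M3−M2)/3 is feasible (all values nonnegative, M_Tℓ + M_Rℓ = Mℓ for ℓ = 1,2,3) and attains the value M1 + (M2+M3−M1)/3 for the objective d = min{M_T1+M_T2+M_T3, M_R1+M_R2+M_R3, max{M_R2,M_T3}+max{M_R3,M_T2}, max{M_R2,M_T1}+max{M_R1,M_T2}, max{M_R3,M_T1}+max{M_R1,M_T3}}. -/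
/-! Every max in the objective is attained by a fixed argument: `MR2, MR3 ≥ MT2 = MT3 ≥ 0 = MR1`
and `MT1 = M1 ≥ MR2, MR3`. Then four of the five terms of the min equal
`M1 + (M2 + M3 - M1) / 3`, and the transmit sum exceeds it by `MT3 ≥ 0`. -/

lemma min_min_min_min_eq_of_le_of_eq {α : Type*} [LinearOrder α] {a b c d e v : α}
    (ha : v ≤ a) (hb : b = v) (hc : c = v) (hd : d = v) (he : e = v) :
    min (min (min (min a b) c) d) e = v := by
  subst hb hc hd he
  simp only [min_eq_right ha, min_self]

/-- feasibility and value of the allocation for the unicast case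
when `M1 ≤ M2 + M3`. -/
theorem stmt_0 (M1 M2 M3 : ℝ) (h1 : 0 ≤ M3) (h2 : M3 ≤ M2) (h3 : M2 ≤ M1)
    (h4 : M1 ≤ M2 + M3) :
    let MT1 := M1; let MR1 := (0 : ℝ)
    let MT2 := (M2 + M3 - M1) / 3; let MR2 := (M1 + 2 * M2 - M3) / 3
    let MT3 := (M2 + M3 - M1) / 3; let MR3 := (M1 + 2 * M3 - M2) / 3
    (0 ≤ MT1 ∧ 0 ≤ MR1 ∧ 0 ≤ MT2 ∧ 0 ≤ MR2 ∧ 0 ≤ MT3 ∧ 0 ≤ MR3) ∧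
    (MT1 + MR1 = M1 ∧ MT2 + MR2 = M2 ∧ MT3 + MR3 = M3) ∧
    min (min (min (min (MT1 + MT2 + MT3) (MR1 + MR2 + MR3))
          (max MR2 MT3 + max MR3 MT2))
        (max MR2 MT1 + max MR1 MT2))
      (max MR3 MT1 + max MR1 MT3)
      = M1 + (M2 + M3 - M1) / 3 := by
  dsimp only
  have hT : 0 ≤ (M2 + M3 - M1) / 3 := by linarith
  have hT_R2 : (M2 + M3 - M1) / 3 ≤ (M1 + 2 * M2 - M3) / 3 := by linarith
  have hT_R3 : (M2 + M3 - M1) / 3 ≤ (M1 + 2 * M3 - M2) / 3 := by linarith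
  have hR2 : (M1 + 2 * M2 - M3) / 3 ≤ M1 := by linarith
  have hR3 : (M1 + 2 * M3 - M2) / 3 ≤ M1 := by linarith
  refine ⟨⟨by linarith, le_rfl, hT, by linarith, hT, by linarith⟩,
    ⟨by ring, by ring, by ring⟩, ?_⟩
  rw [max_eq_left hT_R2, max_eq_left hT_R3, max_eq_right hR2, max_eq_right hR3,
    max_eq_right hT]
  exact min_min_min_min_eq_of_le_of_eq (by linarith) (by ring) (by ring) (by ring) (by ring)
end

section
/- For all nonnegative reals M1 ≥ M2 ≥ M3 with M1 ≤ M2 + M3, and for every choice of nonnegative M_Tℓ, M_Rℓ with M_Tℓ + M_Rℓ = Mℓ (ℓ = 1,2,3), the quantity min{M_T1+M_T2+M_T3, M_R1+M_R2+M_R3, max{M_R2,M_T3}+max{M_R3,M_T2}, max{M_R2,M_T1}+max{M_R1,M_T2}, max{M_R3,M_T1}+max{M_R1,M_T3}} is at most M1 + (M2+M3−M1)/3. -/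
/-!
Each pair term equals `max (M_i, M_j, M_Ri + M_Rj, M_Ti + M_Tj)`, and in the regime
`M1 ≤ M2 + M3` every `M_i` is at most the bound `B`. So if all five terms exceeded `B`,
each of the three pair terms would exceed it through a pure receive sum or a pure transmit
sum. Two of the three pairs then use the same kind of sum, and they share a node `i`;
adding those two sums to the full sum of the other kind gives
`3B < x_i + (M1 + M2 + M3)`, where `x_i ≤ M_i ≤ M1`. This contradicts `3B = 2 M1 + M2 + M3`.
-/

theorem lt_add_or_lt_add_of_lt_max_add_max {α : Type*} [AddCommMonoid α] [LinearOrder α]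
    {a b c d B : α} (had : a + d ≤ B) (hbc : b + c ≤ B) (h : B < max a b + max c d) :
    B < a + c ∨ B < b + d := by
  rcases le_total a b with hab | hba <;> rcases le_total c d with hcd | hdc
  · rw [max_eq_right hab, max_eq_right hcd] at h
    exact Or.inr h
  · rw [max_eq_right hab, max_eq_left hdc] at h
    exact absurd hbc h.not_ge
  · rw [max_eq_left hba, max_eq_right hcd] at h
    exact absurd had h.not_ge
  · rw [max_eq_left hba, max_eq_left hdc] at h
    exact Or.inl h

theorem stmt_1_general (M1 M2 M3 : ℝ) (h2 : M3 ≤ M2) (h3 : M2 ≤ M1)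
    (h4 : M1 ≤ M2 + M3)
    (MT1 MT2 MT3 MR1 MR2 MR3 : ℝ)
    (hT1 : 0 ≤ MT1) (hT2 : 0 ≤ MT2) (hT3 : 0 ≤ MT3)
    (hR1 : 0 ≤ MR1) (hR2 : 0 ≤ MR2) (hR3 : 0 ≤ MR3)
    (hM1 : MT1 + MR1 = M1) (hM2 : MT2 + MR2 = M2) (hM3 : MT3 + MR3 = M3) :
    min (min (min (min (MT1 + MT2 + MT3) (MR1 + MR2 + MR3))
          (max MR2 MT3 + max MR3 MT2))
        (max MR2 MT1 + max MR1 MT2))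
      (max MR3 MT1 + max MR1 MT3)
      ≤ M1 + (M2 + M3 - M1) / 3 := by
  by_contra! hlt
  simp only [lt_min_iff] at hlt
  obtain ⟨⟨⟨⟨hT, hR⟩, h23⟩, h12⟩, h13⟩ := hlt
  have hB : M1 ≤ M1 + (M2 + M3 - M1) / 3 := by linarith
  rcases lt_add_or_lt_add_of_lt_max_add_max (by linarith) (by linarith) h23 with h23 | h23 <;>
  rcases lt_add_or_lt_add_of_lt_max_add_max (by linarith) (by linarith) h12 with h12 | h12 <;>
  rcases lt_add_or_lt_add_of_lt_max_add_max (by linarith) (by linarith) h13 with h13 | h13 <;>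
  linarith

/-- converse of P1 in the regime `M1 ≤ M2 + M3`. -/
theorem stmt_1 (M1 M2 M3 : ℝ) (h1 : 0 ≤ M3) (h2 : M3 ≤ M2) (h3 : M2 ≤ M1)
    (h4 : M1 ≤ M2 + M3)
    (MT1 MT2 MT3 MR1 MR2 MR3 : ℝ)
    (hT1 : 0 ≤ MT1) (hT2 : 0 ≤ MT2) (hT3 : 0 ≤ MT3)
    (hR1 : 0 ≤ MR1) (hR2 : 0 ≤ MR2) (hR3 : 0 ≤ MR3)
    (hM1 : MT1 + MR1 = M1) (hM2 : MT2 + MR2 = M2) (hM3 : MT3 + MR3 = M3) :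
    min (min (min (min (MT1 + MT2 + MT3) (MR1 + MR2 + MR3))
          (max MR2 MT3 + max MR3 MT2))
        (max MR2 MT1 + max MR1 MT2))
      (max MR3 MT1 + max MR1 MT3)
      ≤ M1 + (M2 + M3 - M1) / 3 :=
  stmt_1_general M1 M2 M3 h2 h3 h4 MT1 MT2 MT3 MR1 MR2 MR3 hT1 hT2 hT3 hR1 hR2 hR3 hM1 hM2 hM3
end

section
/- For all nonnegative reals M1 ≥ M2 ≥ M3 with M1 ≥ M2 + M3, and for every choice of nonnegative M_Tℓ, M_Rℓ with M_Tℓ + M_Rℓ = Mℓ (ℓ = 1,2,3), the quantity min{M_T1+M_T2+M_T3, M_R1+M_R2+M_R3, max{M_R2,M_T3}+max{M_R3,M_T2}, max{M_R2,M_T1}+max{M_R1,M_T2}, max{M_R3,M_T1}+max{M_R1,M_T3}} is at most M2 + M3, and this bound is attained by the allocation M_R1 = M2 + M3, M_R2 = M_R3 = 0. -/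
/-! Bounding each `max` by the sum of its two nonnegative arguments shows that the third term
of the minimum is at most `M_R2 + M_T2 + M_R3 + M_T3 = M2 + M3`. For the allocation
`M_R1 = M2 + M3`, `M_R2 = M_R3 = 0`, every term is at least `M2 + M3` once `M1 ≥ M2 + M3`,
and the receive-antenna sum equals it. -/

def p1Objective (MT1 MT2 MT3 MR1 MR2 MR3 : ℝ) : ℝ :=
  min (min (min (min (MT1 + MT2 + MT3) (MR1 + MR2 + MR3))
        (max MR2 MT3 + max MR3 MT2))
      (max MR2 MT1 + max MR1 MT2))
    (max MR3 MT1 + max MR1 MT3)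

lemma p1Objective_le_add {MT1 MT2 MT3 MR1 MR2 MR3 : ℝ} (hT2 : 0 ≤ MT2) (hT3 : 0 ≤ MT3)
    (hR2 : 0 ≤ MR2) (hR3 : 0 ≤ MR3) :
    p1Objective MT1 MT2 MT3 MR1 MR2 MR3 ≤ (MT2 + MR2) + (MT3 + MR3) :=
  calc p1Objective MT1 MT2 MT3 MR1 MR2 MR3 ≤ max MR2 MT3 + max MR3 MT2 :=
        (min_le_left _ _).trans ((min_le_left _ _).trans (min_le_right _ _))
    _ ≤ (MR2 + MT3) + (MR3 + MT2) :=
        add_le_add (max_le_add_of_nonneg hR2 hT3) (max_le_add_of_nonneg hR3 hT2)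
    _ = (MT2 + MR2) + (MT3 + MR3) := by ring

lemma p1Objective_receive_at_one {a b c : ℝ} (h : b + c ≤ a) :
    p1Objective (a - (b + c)) b c (b + c) 0 0 = b + c := by
  refine le_antisymm ((min_le_left _ _).trans ((min_le_left _ _).trans
    ((min_le_left _ _).trans ((min_le_right _ _).trans_eq (by ring))))) ?_
  simp only [p1Objective, le_min_iff]
  refine ⟨⟨⟨⟨by linarith, by linarith⟩, ?_⟩, ?_⟩, ?_⟩
  · linarith [le_max_right 0 c, le_max_right 0 b]
  · linarith [le_max_left 0 (a - (b + c)), le_max_left (b + c) b]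
  · linarith [le_max_left 0 (a - (b + c)), le_max_left (b + c) c]

theorem stmt_2_general (M1 M2 M3 : ℝ)
    (h4 : M2 + M3 ≤ M1) :
    (∀ MT1 MT2 MT3 MR1 MR2 MR3 : ℝ,
      0 ≤ MT1 → 0 ≤ MT2 → 0 ≤ MT3 → 0 ≤ MR1 → 0 ≤ MR2 → 0 ≤ MR3 →
      MT1 + MR1 = M1 → MT2 + MR2 = M2 → MT3 + MR3 = M3 →
      min (min (min (min (MT1 + MT2 + MT3) (MR1 + MR2 + MR3))
            (max MR2 MT3 + max MR3 MT2))
          (max MR2 MT1 + max MR1 MT2))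
        (max MR3 MT1 + max MR1 MT3)
        ≤ M2 + M3) ∧
    (let MR1 := M2 + M3; let MR2 := (0 : ℝ); let MR3 := (0 : ℝ)
     let MT1 := M1 - MR1; let MT2 := M2 - MR2; let MT3 := M3 - MR3
     min (min (min (min (MT1 + MT2 + MT3) (MR1 + MR2 + MR3))
           (max MR2 MT3 + max MR3 MT2))
         (max MR2 MT1 + max MR1 MT2))
       (max MR3 MT1 + max MR1 MT3)
       = M2 + M3) := by
  refine ⟨fun MT1 MT2 MT3 MR1 MR2 MR3 _ hT2 hT3 _ hR2 hR3 _ e2 e3 => ?_, ?_⟩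
  · exact (p1Objective_le_add (MT1 := MT1) (MR1 := MR1) hT2 hT3 hR2 hR3).trans_eq
      (by rw [e2, e3])
  · show p1Objective (M1 - (M2 + M3)) (M2 - 0) (M3 - 0) (M2 + M3) 0 0 = M2 + M3
    rw [sub_zero, sub_zero]
    exact p1Objective_receive_at_one h4

/-- P1 in the regime `M1 ≥ M2 + M3`: bound `M2 + M3` and its attainment. -/
theorem stmt_2 (M1 M2 M3 : ℝ) (h1 : 0 ≤ M3) (h2 : M3 ≤ M2) (h3 : M2 ≤ M1)
    (h4 : M2 + M3 ≤ M1) :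
    (∀ MT1 MT2 MT3 MR1 MR2 MR3 : ℝ,
      0 ≤ MT1 → 0 ≤ MT2 → 0 ≤ MT3 → 0 ≤ MR1 → 0 ≤ MR2 → 0 ≤ MR3 →
      MT1 + MR1 = M1 → MT2 + MR2 = M2 → MT3 + MR3 = M3 →
      min (min (min (min (MT1 + MT2 + MT3) (MR1 + MR2 + MR3))
            (max MR2 MT3 + max MR3 MT2))
          (max MR2 MT1 + max MR1 MT2))
        (max MR3 MT1 + max MR1 MT3)
        ≤ M2 + M3) ∧
    (let MR1 := M2 + M3; let MR2 := (0 : ℝ); let MR3 := (0 : ℝ)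
     let MT1 := M1 - MR1; let MT2 := M2 - MR2; let MT3 := M3 - MR3
     min (min (min (min (MT1 + MT2 + MT3) (MR1 + MR2 + MR3))
           (max MR2 MT3 + max MR3 MT2))
         (max MR2 MT1 + max MR1 MT2))
       (max MR3 MT1 + max MR1 MT3)
       = M2 + M3) :=
  stmt_2_general M1 M2 M3 h4
end

section
/- For nonnegative reals M1 ≥ M2 ≥ M3, the maximum over all feasible antenna allocations (M_Tℓ + M_Rℓ = Mℓ, all nonnegative) of min{M_T1+M_T2+M_T3, M_R1+M_R2+M_R3, max{M_R2,M_T3}+max{M_R3,M_T2}, max{M_R2,M_T1}+max{M_R1,M_T2}, max{M_R3,M_T1}+max{M_R1,M_T3}} equals min{M1 + (M2+M3−M1)/3, M2+M3}. -/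
/-!
A pairwise cut bound `max MRj MTi + max MRi MTj` is the largest of `Mi`, `Mj`, `MRi + MRj` and
`MTi + MTj`. The `(2,3)` cut alone gives `d ≤ M2 + M3`. If `d ≤ M1` as well, then
`3d ≤ 2M1 + M2 + M3`. Otherwise `d` exceeds every `Mi`, so each of the three pairwise cuts
forces `d` below the all-receive or the all-transmit sum of its pair, and in every combination
three of the available bounds add up to at most `2M1 + M2 + M3`.

The bound is attained when node 1 only receives and nodes 2 and 3 each receive with
`(M2 + M3 - M1) / 3` antennas if `M1 ≤ M2 + M3`, and otherwise when nodes 2 and 3 only transmit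
and node 1 receives with `M2 + M3` antennas.
-/

section ThreeWayChannel

variable {M1 M2 M3 MT1 MT2 MT3 MR1 MR2 MR3 : ℝ}

theorem le_add_or_le_add_of_le_max_add_max {α : Type*} [LinearOrder α] [AddCommMagma α]
    {ti ri tj rj d : α} (h : d ≤ max rj ti + max ri tj) (hi : ti + ri < d)
    (hj : tj + rj < d) : d ≤ ri + rj ∨ d ≤ ti + tj := by
  rcases max_choice rj ti with hmax₁ | hmax₁ <;> rcases max_choice ri tj with hmax₂ | hmax₂ <;>
    rw [hmax₁, hmax₂] at h
  · exact Or.inl (h.trans_eq (add_comm _ _))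
  · exact absurd (h.trans_eq (add_comm _ _)) hj.not_ge
  · exact absurd h hi.not_ge
  · exact Or.inr h

def cutSetBound (MT1 MT2 MT3 MR1 MR2 MR3 : ℝ) : ℝ :=
  min (min (min (min (MT1 + MT2 + MT3) (MR1 + MR2 + MR3))
        (max MR2 MT3 + max MR3 MT2))
      (max MR2 MT1 + max MR1 MT2))
    (max MR3 MT1 + max MR1 MT3)

noncomputable def optimalDoF (M1 M2 M3 : ℝ) : ℝ :=
  min (M1 + (M2 + M3 - M1) / 3) (M2 + M3)

def dofRegion (M1 M2 M3 : ℝ) : Set ℝ :=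
  { d : ℝ | ∃ MT1 MT2 MT3 MR1 MR2 MR3 : ℝ,
      0 ≤ MT1 ∧ 0 ≤ MT2 ∧ 0 ≤ MT3 ∧ 0 ≤ MR1 ∧ 0 ≤ MR2 ∧ 0 ≤ MR3 ∧
      MT1 + MR1 = M1 ∧ MT2 + MR2 = M2 ∧ MT3 + MR3 = M3 ∧
      d = cutSetBound MT1 MT2 MT3 MR1 MR2 MR3 }

theorem le_cutSetBound_iff {d : ℝ} :
    d ≤ cutSetBound MT1 MT2 MT3 MR1 MR2 MR3 ↔
      d ≤ MT1 + MT2 + MT3 ∧ d ≤ MR1 + MR2 + MR3 ∧ d ≤ max MR2 MT3 + max MR3 MT2 ∧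
        d ≤ max MR2 MT1 + max MR1 MT2 ∧ d ≤ max MR3 MT1 + max MR1 MT3 := by
  simp only [cutSetBound, le_min_iff, and_assoc]

theorem cutSetBound_le_optimalDoF (hT1 : 0 ≤ MT1) (hT2 : 0 ≤ MT2) (hT3 : 0 ≤ MT3)
    (hR1 : 0 ≤ MR1) (hR2 : 0 ≤ MR2) (hR3 : 0 ≤ MR3) (hM1 : MT1 + MR1 = M1)
    (hM2 : MT2 + MR2 = M2) (hM3 : MT3 + MR3 = M3) (h32 : M3 ≤ M2) (h21 : M2 ≤ M1) :
    cutSetBound MT1 MT2 MT3 MR1 MR2 MR3 ≤ optimalDoF M1 M2 M3 := by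
  set d := cutSetBound MT1 MT2 MT3 MR1 MR2 MR3
  obtain ⟨hT, hR, h23, h12, h13⟩ := le_cutSetBound_iff.mp (le_refl d)
  have hd23 : d ≤ M2 + M3 := by
    linarith [max_le_add_of_nonneg hR2 hT3, max_le_add_of_nonneg hR3 hT2]
  suffices 3 * d ≤ 2 * M1 + M2 + M3 from le_min (by linarith) hd23
  rcases le_or_gt d M1 with hd1 | hd1
  · linarith
  -- In each of the eight branches, three of the bounds on `d` sum to at most `2M1 + M2 + M3`.
  rcases le_add_or_le_add_of_le_max_add_max h12 (by linarith) (by linarith) with h12 | h12 <;>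
    rcases le_add_or_le_add_of_le_max_add_max h13 (by linarith) (by linarith) with h13 | h13 <;>
    rcases le_add_or_le_add_of_le_max_add_max h23 (by linarith) (by linarith) with h23 | h23 <;>
    linarith

theorem optimalDoF_mem_upperBounds_dofRegion (h32 : M3 ≤ M2) (h21 : M2 ≤ M1) :
    optimalDoF M1 M2 M3 ∈ upperBounds (dofRegion M1 M2 M3) := by
  rintro _ ⟨MT1, MT2, MT3, MR1, MR2, MR3, hT1, hT2, hT3, hR1, hR2, hR3, hM1, hM2, hM3, rfl⟩
  exact cutSetBound_le_optimalDoF hT1 hT2 hT3 hR1 hR2 hR3 hM1 hM2 hM3 h32 h21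

theorem optimalDoF_le_cutSetBound_of_three_mul_eq {a : ℝ} (ha : 0 ≤ a)
    (h : 3 * a = M2 + M3 - M1) :
    optimalDoF M1 M2 M3 ≤ cutSetBound 0 (M2 - a) (M3 - a) M1 a a := by
  have hopt : optimalDoF M1 M2 M3 ≤ M1 + a := (min_le_left _ _).trans (by linarith)
  refine le_cutSetBound_iff.mpr ⟨by linarith, by linarith, ?_, ?_, ?_⟩
  · linarith [le_max_right a (M3 - a), le_max_right a (M2 - a)]
  · linarith [le_max_left a 0, le_max_left M1 (M2 - a)]
  · linarith [le_max_left a 0, le_max_left M1 (M3 - a)]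

theorem optimalDoF_le_cutSetBound_of_add_le (h : M2 + M3 ≤ M1) :
    optimalDoF M1 M2 M3 ≤ cutSetBound (M1 - M2 - M3) M2 M3 (M2 + M3) 0 0 := by
  have hopt : optimalDoF M1 M2 M3 ≤ M2 + M3 := min_le_right _ _
  refine le_cutSetBound_iff.mpr ⟨by linarith, by linarith, ?_, ?_, ?_⟩
  · linarith [le_max_right 0 M3, le_max_right 0 M2]
  · linarith [le_max_left 0 (M1 - M2 - M3), le_max_left (M2 + M3) M2]
  · linarith [le_max_left 0 (M1 - M2 - M3), le_max_left (M2 + M3) M3]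

theorem exists_mem_dofRegion_optimalDoF_le (h03 : 0 ≤ M3) (h32 : M3 ≤ M2) (h21 : M2 ≤ M1) :
    ∃ d ∈ dofRegion M1 M2 M3, optimalDoF M1 M2 M3 ≤ d := by
  rcases le_total M1 (M2 + M3) with h | h
  · obtain ⟨a, ha⟩ : ∃ a : ℝ, 3 * a = M2 + M3 - M1 := ⟨(M2 + M3 - M1) / 3, by ring⟩
    refine ⟨_, ⟨0, M2 - a, M3 - a, M1, a, a, le_rfl, by linarith, by linarith, by linarith,
      by linarith, by linarith, by ring, by ring, by ring, rfl⟩,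
      optimalDoF_le_cutSetBound_of_three_mul_eq (by linarith) ha⟩
  · refine ⟨_, ⟨M1 - M2 - M3, M2, M3, M2 + M3, 0, 0, by linarith, by linarith, h03, by linarith,
      le_rfl, le_rfl, by ring, by ring, by ring, rfl⟩, optimalDoF_le_cutSetBound_of_add_le h⟩

end ThreeWayChannel

/-- Theorem 1 — the optimal total DoF of the unicast-only MIMO 3-way channel. -/
theorem stmt_3 (M1 M2 M3 : ℝ) (h1 : 0 ≤ M3) (h2 : M3 ≤ M2) (h3 : M2 ≤ M1) :
    IsGreatest
      { d : ℝ | ∃ MT1 MT2 MT3 MR1 MR2 MR3 : ℝ,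
          0 ≤ MT1 ∧ 0 ≤ MT2 ∧ 0 ≤ MT3 ∧ 0 ≤ MR1 ∧ 0 ≤ MR2 ∧ 0 ≤ MR3 ∧
          MT1 + MR1 = M1 ∧ MT2 + MR2 = M2 ∧ MT3 + MR3 = M3 ∧
          d = min (min (min (min (MT1 + MT2 + MT3) (MR1 + MR2 + MR3))
                (max MR2 MT3 + max MR3 MT2))
              (max MR2 MT1 + max MR1 MT2))
            (max MR3 MT1 + max MR1 MT3) }
      (min (M1 + (M2 + M3 - M1) / 3) (M2 + M3)) := by
  change IsGreatest (dofRegion M1 M2 M3) (optimalDoF M1 M2 M3)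
  have hupper := optimalDoF_mem_upperBounds_dofRegion h2 h3
  obtain ⟨d, hd, hle⟩ := exists_mem_dofRegion_optimalDoF_le h1 h2 h3
  exact ⟨le_antisymm (hupper hd) hle ▸ hd, hupper⟩
end

section
/- For nonnegative reals M1 ≥ M2 ≥ M3 and every feasible allocation M_Tℓ + M_Rℓ = Mℓ (all nonnegative), the quantity min{M_R1+M_R2+M_R3, M_T2+M_T3+M_R2+M_R3, M_R3+M_T1+M_T2+2M_T3, 2(M_T1+M_T2+M_T3)} is at most M2 + M3, and the allocation M_T1 = M1−M2, M_T2 = M2−M3, M_T3 = M3 achieves equality. -/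
theorem stmt_8_general (M1 M2 M3 : ℝ) (h2 : M3 ≤ M2) (h3 : M2 ≤ M1) :
    (∀ MT1 MT2 MT3 MR1 MR2 MR3 : ℝ,
      0 ≤ MT1 → 0 ≤ MT2 → 0 ≤ MT3 → 0 ≤ MR1 → 0 ≤ MR2 → 0 ≤ MR3 →
      MT1 + MR1 = M1 → MT2 + MR2 = M2 → MT3 + MR3 = M3 →
      min (min (MR1 + MR2 + MR3) (MT2 + MT3 + MR2 + MR3))
          (min (MR3 + MT1 + MT2 + 2 * MT3) (2 * (MT1 + MT2 + MT3)))
        ≤ M2 + M3) ∧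
    (let MT1 := M1 - M2; let MT2 := M2 - M3; let MT3 := M3
     let MR1 := M1 - MT1; let MR2 := M2 - MT2; let MR3 := M3 - MT3
     min (min (MR1 + MR2 + MR3) (MT2 + MT3 + MR2 + MR3))
         (min (MR3 + MT1 + MT2 + 2 * MT3) (2 * (MT1 + MT2 + MT3)))
       = M2 + M3) := by
  -- The second cut-set bound is `(MT2 + MR2) + (MT3 + MR3) = M2 + M3` for every allocation.
  refine ⟨fun MT1 MT2 MT3 MR1 MR2 MR3 _ _ _ _ _ _ _ hM2 hM3 =>
    min_le_of_left_le (min_le_of_right_le (by linarith)), ?_⟩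
  -- At this allocation the four bounds are `M2 + M3`, `M2 + M3`, `M1 + M3` and `2 * M1`.
  intro MT1 MT2 MT3 MR1 MR2 MR3
  refine le_antisymm (min_le_of_left_le (min_le_of_right_le (by linarith))) ?_
  exact le_min (le_min (by linarith) (by linarith)) (le_min (by linarith) (by linarith))

/-- Lemma 2 (problem P2), unicast + broadcast case. -/
theorem stmt_8 (M1 M2 M3 : ℝ) (h1 : 0 ≤ M3) (h2 : M3 ≤ M2) (h3 : M2 ≤ M1) :
    (∀ MT1 MT2 MT3 MR1 MR2 MR3 : ℝ,
      0 ≤ MT1 → 0 ≤ MT2 → 0 ≤ MT3 → 0 ≤ MR1 → 0 ≤ MR2 → 0 ≤ MR3 →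
      MT1 + MR1 = M1 → MT2 + MR2 = M2 → MT3 + MR3 = M3 →
      min (min (MR1 + MR2 + MR3) (MT2 + MT3 + MR2 + MR3))
          (min (MR3 + MT1 + MT2 + 2 * MT3) (2 * (MT1 + MT2 + MT3)))
        ≤ M2 + M3) ∧
    (let MT1 := M1 - M2; let MT2 := M2 - M3; let MT3 := M3
     let MR1 := M1 - MT1; let MR2 := M2 - MT2; let MR3 := M3 - MT3
     min (min (MR1 + MR2 + MR3) (MT2 + MT3 + MR2 + MR3))
         (min (MR3 + MT1 + MT2 + 2 * MT3) (2 * (MT1 + MT2 + MT3)))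
       = M2 + M3) :=
  stmt_8_general M1 M2 M3 h2 h3
end

section
/- The optimization problem: maximize d subject to 0 ≤ d ≤ M2+M3, max{d−M3, d/2} ≤ M_T1+M_T2+M_T3 ≤ M1+M2+M3−d, and 0 ≤ M_Tℓ ≤ Mℓ (ℓ = 1,2,3), where M1 ≥ M2 ≥ M3 ≥ 0, has optimal value d* = M2+M3; moreover d = M2+M3 is feasible if and only if M2 ≤ M_T1+M_T2+M_T3 ≤ M1. -/
/-! Since `d ≤ M2 + M3` is itself a constraint, `M2 + M3` is optimal as soon as it is feasible.
At `d = M2 + M3` the constraints collapse, using `M3 ≤ M2`, to `M2 ≤ MT1 + MT2 + MT3 ≤ M1`,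
which the split `(MT1, MT2, MT3) = (M2, 0, 0)` satisfies because `M2 ≤ M1`. -/

section

variable {K : Type*} [Field K] [LinearOrder K] [IsStrictOrderedRing K]

lemma max_add_sub_right_half_eq_of_le {a b : K} (h : b ≤ a) :
    max ((a + b) - b) ((a + b) / 2) = a := by
  rw [add_sub_cancel_right]
  exact max_eq_left (by linarith)

lemma feasible_at_sum_iff {M1 M2 M3 s : K} (h1 : 0 ≤ M3) (h2 : M3 ≤ M2) :
    (0 ≤ M2 + M3 ∧ max ((M2 + M3) - M3) ((M2 + M3) / 2) ≤ s ∧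
        s ≤ M1 + M2 + M3 - (M2 + M3)) ↔
      (M2 ≤ s ∧ s ≤ M1) := by
  rw [max_add_sub_right_half_eq_of_le h2, show M1 + M2 + M3 - (M2 + M3) = M1 by ring]
  exact and_iff_right (by linarith)

end

/-- problem P8 from Appendix B. -/
theorem stmt_10 (M1 M2 M3 : ℝ) (h1 : 0 ≤ M3) (h2 : M3 ≤ M2) (h3 : M2 ≤ M1) :
    IsGreatest
      { d : ℝ | ∃ MT1 MT2 MT3 : ℝ,
          0 ≤ d ∧ d ≤ M2 + M3 ∧
          max (d - M3) (d / 2) ≤ MT1 + MT2 + MT3 ∧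
          MT1 + MT2 + MT3 ≤ M1 + M2 + M3 - d ∧
          0 ≤ MT1 ∧ MT1 ≤ M1 ∧ 0 ≤ MT2 ∧ MT2 ≤ M2 ∧ 0 ≤ MT3 ∧ MT3 ≤ M3 }
      (M2 + M3) ∧
    (∀ MT1 MT2 MT3 : ℝ,
      0 ≤ MT1 → MT1 ≤ M1 → 0 ≤ MT2 → MT2 ≤ M2 → 0 ≤ MT3 → MT3 ≤ M3 →
      ((0 ≤ M2 + M3 ∧ max ((M2 + M3) - M3) ((M2 + M3) / 2) ≤ MT1 + MT2 + MT3 ∧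
          MT1 + MT2 + MT3 ≤ M1 + M2 + M3 - (M2 + M3)) ↔
        (M2 ≤ MT1 + MT2 + MT3 ∧ MT1 + MT2 + MT3 ≤ M1))) := by
  refine ⟨⟨⟨M2, 0, 0, ?_⟩, fun d ⟨_, _, _, _, hd, _⟩ => hd⟩,
    fun MT1 MT2 MT3 _ _ _ _ _ _ => feasible_at_sum_iff h1 h2⟩
  obtain ⟨h0, hmax, hup⟩ :=
    (feasible_at_sum_iff (M1 := M1) (s := M2 + 0 + 0) h1 h2).2 (by simpa using h3)
  exact ⟨h0, le_rfl, hmax, hup, by linarith, h3, le_rfl, by linarith, le_rfl, h1⟩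
end

section
/- The linear program: maximize d over nonnegative reals d, M_R1, M_R2, M_R3 subject to d ≤ M_R2+M_R3, d ≤ M1+M2−M_R1−M_R2, d ≤ M1+M3−M_R1−M_R3, M_Rℓ ≤ Mℓ (ℓ = 1,2,3), M_R2 ≥ M3−M_R3, M_R3 ≥ M2−M_R2, M1−M_R1 ≥ M_R2, M2−M_R2 ≥ M_R1, M1−M_R1 ≥ M_R3, M3−M_R3 ≥ M_R1, where M1 ≥ M2 ≥ M3 ≥ 0 and M1 ≤ M2+M3, has optimal value (2M1+M2+M3)/3, attained at (d, M_R1, M_R2, M_R3) = ((2M1+M2+M3)/3, 0, (M1+2M2−M3)/3, (M1+2M3−M2)/3). -/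
/-!
Summing the three upper bounds on `d` cancels `MR2` and `MR3` and leaves
`3 d ≤ 2 M1 + M2 + M3 - 2 MR1`, so `MR1 ≥ 0` gives the bound (the dual certificate is
`(1/3, 1/3, 1/3)` on these constraints and `2/3` on `MR1 ≥ 0`). The proposed point makes all
three bounds tight with `MR1 = 0`; its remaining constraints reduce to the ordering
`M3 ≤ M2 ≤ M1 ≤ M2 + M3`.
-/

/-- The constraints of problem P4, with `M_Tℓ = Mℓ - MRℓ` substituted. -/
def P4Feasible (M1 M2 M3 d MR1 MR2 MR3 : ℝ) : Prop :=
  0 ≤ d ∧ 0 ≤ MR1 ∧ 0 ≤ MR2 ∧ 0 ≤ MR3 ∧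
  d ≤ MR2 + MR3 ∧
  d ≤ M1 + M2 - MR1 - MR2 ∧
  d ≤ M1 + M3 - MR1 - MR3 ∧
  MR1 ≤ M1 ∧ MR2 ≤ M2 ∧ MR3 ≤ M3 ∧
  M3 - MR3 ≤ MR2 ∧ M2 - MR2 ≤ MR3 ∧
  MR2 ≤ M1 - MR1 ∧ MR1 ≤ M2 - MR2 ∧
  MR3 ≤ M1 - MR1 ∧ MR1 ≤ M3 - MR3

theorem le_of_three_rate_bounds {M1 M2 M3 d MR1 MR2 MR3 : ℝ} (hMR1 : 0 ≤ MR1)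
    (hd23 : d ≤ MR2 + MR3) (hd12 : d ≤ M1 + M2 - MR1 - MR2)
    (hd13 : d ≤ M1 + M3 - MR1 - MR3) :
    d ≤ (2 * M1 + M2 + M3) / 3 := by
  linarith

theorem P4Feasible.le {M1 M2 M3 d MR1 MR2 MR3 : ℝ}
    (h : P4Feasible M1 M2 M3 d MR1 MR2 MR3) :
    d ≤ (2 * M1 + M2 + M3) / 3 :=
  let ⟨_, hMR1, _, _, hd23, hd12, hd13, _⟩ := h
  le_of_three_rate_bounds hMR1 hd23 hd12 hd13

theorem p4Feasible_optimum {M1 M2 M3 : ℝ} (h1 : 0 ≤ M3) (h2 : M3 ≤ M2) (h3 : M2 ≤ M1)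
    (h4 : M1 ≤ M2 + M3) :
    P4Feasible M1 M2 M3 ((2 * M1 + M2 + M3) / 3) 0
      ((M1 + 2 * M2 - M3) / 3) ((M1 + 2 * M3 - M2) / 3) := by
  unfold P4Feasible
  constructorm* _ ∧ _ <;> linarith

/-- problem P4 from Appendix A, with its optimal value and optimizer. -/
theorem stmt_11 (M1 M2 M3 : ℝ) (h1 : 0 ≤ M3) (h2 : M3 ≤ M2) (h3 : M2 ≤ M1)
    (h4 : M1 ≤ M2 + M3) :
    IsGreatest
      { d : ℝ | ∃ MR1 MR2 MR3 : ℝ,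
          0 ≤ d ∧ 0 ≤ MR1 ∧ 0 ≤ MR2 ∧ 0 ≤ MR3 ∧
          d ≤ MR2 + MR3 ∧
          d ≤ M1 + M2 - MR1 - MR2 ∧
          d ≤ M1 + M3 - MR1 - MR3 ∧
          MR1 ≤ M1 ∧ MR2 ≤ M2 ∧ MR3 ≤ M3 ∧
          M3 - MR3 ≤ MR2 ∧ M2 - MR2 ≤ MR3 ∧
          MR2 ≤ M1 - MR1 ∧ MR1 ≤ M2 - MR2 ∧
          MR3 ≤ M1 - MR1 ∧ MR1 ≤ M3 - MR3 }
      ((2 * M1 + M2 + M3) / 3) ∧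
    (let d := (2 * M1 + M2 + M3) / 3
     let MR1 := (0 : ℝ); let MR2 := (M1 + 2 * M2 - M3) / 3
     let MR3 := (M1 + 2 * M3 - M2) / 3
     0 ≤ d ∧ 0 ≤ MR1 ∧ 0 ≤ MR2 ∧ 0 ≤ MR3 ∧
     d ≤ MR2 + MR3 ∧
     d ≤ M1 + M2 - MR1 - MR2 ∧
     d ≤ M1 + M3 - MR1 - MR3 ∧
     MR1 ≤ M1 ∧ MR2 ≤ M2 ∧ MR3 ≤ M3 ∧
     M3 - MR3 ≤ MR2 ∧ M2 - MR2 ≤ MR3 ∧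
     MR2 ≤ M1 - MR1 ∧ MR1 ≤ M2 - MR2 ∧
     MR3 ≤ M1 - MR1 ∧ MR1 ≤ M3 - MR3) := by
  have hopt := p4Feasible_optimum h1 h2 h3 h4
  exact ⟨⟨⟨_, _, _, hopt⟩, fun _ ⟨_, _, _, hd⟩ => P4Feasible.le hd⟩, hopt⟩
end
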